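/- Define w_n = b·TM_{2n-8}·complement(TM_{2n-6})·complement(TM_{2n-6})' for n ≥ 5. Then for every n ≥ 5, there exist strings x, y, z such that w_n = x·a·y and w_{n+1} = x·b·z; consequently w_n ≺ w_{n+1} lexicographically. -/

import Mathlib

/-- Alphabet {a,b} with a = false, b = true, a < b. -/
abbrev Letter := Bool

/-- Lexicographic order (proper prefixes are smaller). -/
def lexlt (x y : List Bool) : Prop := List.Lex (· < ·) x y

/-- Fibonacci words: F 0 = b, F 1 = a, F (k+2) = F (k+1) ++ F k. -/
def Fib : ℕ → List Bool
  | 0 => [true]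
  | 1 => [false]
  | (k+2) => Fib (k+1) ++ Fib k

/-- bitwise complement -/
def comp (w : List Bool) : List Bool := w.map (fun c => !c)

/-- Thue-Morse words: TM 0 = a, TM (k+1) = TM k ++ comp (TM k). -/
def TM : ℕ → List Bool
  | 0 => [false]
  | (k+1) => TM k ++ comp (TM k)

/-- Fueled Nyldon predicate: a string of length 1 is Nyldon; a longer string is
Nyldon iff it admits no factorization into ≥ 2 Nyldon words in lexicographically
non-decreasing order. -/
def NyldonAux : ℕ → List Bool → Prop
  | 0, _ => False
  | (n+1), w =>
    w.length = 1 ∨ (1 < w.length ∧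
      ¬ ∃ fs : List (List Bool), 2 ≤ fs.length ∧ fs.flatten = w ∧
        fs.Chain' lexlt ∧ ∀ u ∈ fs, NyldonAux n u)

def Nyldon (w : List Bool) : Prop := NyldonAux w.length w

/-- H k = Fib k with its first letter removed. -/
def H (k : ℕ) : List Bool := (Fib k).tail

/-- s is the longest Nyldon proper suffix of w. -/
def IsLnps (w s : List Bool) : Prop :=
  s <:+ w ∧ s ≠ w ∧ Nyldon s ∧
    ∀ t : List Bool, t <:+ w → t ≠ w → Nyldon t → t.length ≤ s.length

/-- Thue-Morse morphism: τ(a)=ab, τ(b)=ba. -/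
def tau (w : List Bool) : List Bool :=
  w.flatMap (fun c => if c then [true, false] else [false, true])

/-- The sequence w_n: w_1=a, w_2=b, w_3=ba, w_4=baabbaa,
w_n = b·TM_{2n-8}·comp(TM_{2n-6})·comp(TM_{2n-6})' for n ≥ 5. -/
def wseq : ℕ → List Bool
  | 0 => []
  | 1 => [false]
  | 2 => [true]
  | 3 => [true, false]
  | 4 => [true, false, false, true, true, false, false]
  | (n+5) => true :: (TM (2*n+2) ++ comp (TM (2*n+4)) ++ (comp (TM (2*n+4))).dropLast)

/-- The twelve words t_i(k). -/
def tword : ℕ → ℕ → List Bool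
  | 1, k => true :: (TM (2*k+1)).dropLast
  | 2, k => true :: TM (2*k+1)
  | 3, k => true :: (TM (2*k+1) ++ (comp (TM (2*k))).dropLast)
  | 4, k => true :: TM (2*k)
  | 5, k => true :: (TM (2*k) ++ TM (2*k-1) ++ (comp (TM (2*k-2))).dropLast)
  | 6, k => true :: (TM (2*k) ++ (TM (2*k+1)).dropLast)
  | 7, k => true :: (TM (2*k) ++ TM (2*k+1))
  | 8, k => true :: (TM (2*k) ++ TM (2*k+1) ++ (comp (TM (2*k))).dropLast)
  | 9, k => true :: (TM (2*k) ++ (comp (TM (2*k+2))).dropLast)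
  | 10, k => true :: (TM (2*k) ++ comp (TM (2*k+2)))
  | 11, k => true :: (TM (2*k) ++ TM (2*k+1) ++ (comp (TM (2*k+2))).dropLast)
  | 12, k => true :: (TM (2*k) ++ comp (TM (2*k+2)) ++ (comp (TM (2*k+2))).dropLast)
  | _, _ => []

/-! Since `TM (k+2) = TM k · comp (TM k) · comp (TM k) · TM k`, both `w_n` and `w_{n+1}` begin
with `b · TM (2n-7)`. In `w_n` this prefix is followed by `TM (2n-8)`, which begins with `a`;
in `w_{n+1}` it is followed by `comp (TM (2n-7))`, which begins with `b`. -/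

lemma comp_append (u v : List Bool) : comp (u ++ v) = comp u ++ comp v :=
  List.map_append

lemma comp_comp (w : List Bool) : comp (comp w) = w := by
  simp [comp, Function.comp_def]

lemma TM_succ (k : ℕ) : TM (k + 1) = TM k ++ comp (TM k) := rfl

lemma comp_TM_succ (k : ℕ) : comp (TM (k + 1)) = comp (TM k) ++ TM k := by
  rw [TM_succ, comp_append, comp_comp]

lemma exists_TM_eq_false_cons (k : ℕ) : ∃ t, TM k = false :: t := by
  induction k with
  | zero => exact ⟨[], rfl⟩
  | succ k ih =>
    obtain ⟨t, ht⟩ := ih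
    exact ⟨t ++ comp (TM k), by rw [TM_succ, ht, List.cons_append]⟩

lemma exists_comp_TM_eq_true_cons (k : ℕ) : ∃ t, comp (TM k) = true :: t := by
  obtain ⟨t, ht⟩ := exists_TM_eq_false_cons k
  exact ⟨comp t, by rw [ht]; rfl⟩

lemma exists_wseq_eq_false (m : ℕ) :
    ∃ y, wseq (m + 5) = true :: TM (2 * m + 3) ++ [false] ++ y := by
  obtain ⟨t, ht⟩ := exists_TM_eq_false_cons (2 * m + 2)
  refine ⟨t ++ TM (2 * m + 3) ++ (comp (TM (2 * m + 4))).dropLast, ?_⟩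
  change true :: (TM (2 * m + 2) ++ comp (TM (2 * m + 4)) ++ _) = _
  rw [comp_TM_succ (2 * m + 3), comp_TM_succ (2 * m + 2), TM_succ (2 * m + 2)]
  nth_rewrite 3 [ht]
  simp only [List.cons_append, List.append_assoc, List.nil_append]

lemma exists_wseq_succ_eq_true (m : ℕ) :
    ∃ z, wseq (m + 6) = true :: TM (2 * m + 3) ++ [true] ++ z := by
  obtain ⟨t, ht⟩ := exists_comp_TM_eq_true_cons (2 * m + 3)
  refine ⟨t ++ comp (TM (2 * m + 6)) ++ (comp (TM (2 * m + 6))).dropLast, ?_⟩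
  change true :: (TM (2 * m + 4) ++ comp (TM (2 * m + 6)) ++ (comp (TM (2 * m + 6))).dropLast) = _
  rw [TM_succ (2 * m + 3), ht]
  simp only [List.cons_append, List.append_assoc, List.nil_append]

theorem stmt16 : ∀ n : ℕ, 5 ≤ n →
    (∃ x y z : List Bool,
      wseq n = x ++ [false] ++ y ∧ wseq (n+1) = x ++ [true] ++ z) ∧
    lexlt (wseq n) (wseq (n+1)) := by
  intro n hn
  obtain ⟨m, rfl⟩ : ∃ m, n = m + 5 := ⟨n - 5, by omega⟩
  obtain ⟨y, hy⟩ := exists_wseq_eq_false m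
  obtain ⟨z, hz⟩ := exists_wseq_succ_eq_true m
  refine ⟨⟨_, y, z, hy, hz⟩, ?_⟩
  rw [hy, hz, List.append_assoc, List.append_assoc]
  exact List.Lex.append_left _ (List.Lex.rel (by decide)) _
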